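/- Let B ∈ ℂ^{n×k} with k ≤ n and P ∈ ℂ^{n×k} with Pᴴ P = I_k. Then Re(tr(Pᴴ B)) = ‖B‖_tr if and only if B = PΛ for some positive semidefinite Hermitian matrix Λ ∈ ℂ^{k×k} (i.e., P is an orthonormal polar factor of B). -/

import Mathlib

open scoped ComplexOrder
open Matrix

/-- The tuple `f` rearranged into decreasing order; `sortedDesc f 0` is the largest entry. -/
noncomputable def sortedDesc {m : ℕ} (f : Fin m → ℝ) : Fin m → ℝ :=
  fun i => (f ∘ Tuple.sort f) i.rev

/-- The singular values of a complex matrix, in decreasing order. -/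
noncomputable def sv {n k : ℕ} (B : Matrix (Fin n) (Fin k) ℂ) : Fin k → ℝ :=
  sortedDesc fun i =>
    Real.sqrt ((Matrix.posSemidef_conjTranspose_mul_self B).isHermitian.eigenvalues i)

/-- The trace (nuclear) norm: the sum of the singular values. -/
noncomputable def trNorm {n k : ℕ} (B : Matrix (Fin n) (Fin k) ℂ) : ℝ := ∑ i, sv B i

/-- The Frobenius norm. -/
noncomputable def frobNorm {n k : ℕ} (A : Matrix (Fin n) (Fin k) ℂ) : ℝ :=
  Real.sqrt (∑ i, ∑ j, ‖A i j‖ ^ 2)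

/-- `‖sin Θ(R(X), R(Y))‖_F` where `Θ` is the diagonal matrix of canonical angles
`θ_i = arccos σ_i(Xᴴ Y)` between the column spaces of `X` and `Y`. -/
noncomputable def sinThetaF {n k : ℕ} (X Y : Matrix (Fin n) (Fin k) ℂ) : ℝ :=
  Real.sqrt (∑ i, Real.sin (Real.arccos (sv (Xᴴ * Y) i)) ^ 2)

/-- The smallest singular value. -/
noncomputable def smin {n k : ℕ} (B : Matrix (Fin n) (Fin k) ℂ) : ℝ := ⨅ i, sv B i

/-- The spectral norm (largest singular value). -/
noncomputable def s2norm {n k : ℕ} (B : Matrix (Fin n) (Fin k) ℂ) : ℝ := ⨆ i, sv B i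

/-- The positive semidefinite square root of a positive semidefinite matrix (as in the older Mathlib). -/
noncomputable def Matrix.PosSemidef.sqrt {n : Type*} [Fintype n] [DecidableEq n] {A : Matrix n n ℂ}
    (hA : A.PosSemidef) : Matrix n n ℂ :=
  hA.1.eigenvectorUnitary.1 * diagonal ((↑) ∘ (√·) ∘ hA.1.eigenvalues) *
  (star hA.1.eigenvectorUnitary : Matrix n n ℂ)

/-- The orthonormal polar factor `B (Bᴴ B)^{-1/2}` (for `B` of full column rank). -/
noncomputable def polarFactor {n k : ℕ} (B : Matrix (Fin n) (Fin k) ℂ) :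
    Matrix (Fin n) (Fin k) ℂ :=
  B * ((Matrix.posSemidef_conjTranspose_mul_self B).sqrt)⁻¹

/-- Eigenvalues of a Hermitian matrix, in decreasing order. -/
noncomputable def eigsDesc {n : ℕ} {H : Matrix (Fin n) (Fin n) ℂ} (hH : H.IsHermitian) :
    Fin n → ℝ :=
  sortedDesc hH.eigenvalues

/-!
Let `V` diagonalize `Bᴴ B`. The columns of `P V` are unit vectors and the columns of `B V` have
norms `σᵢ`, the singular values of `B`, so Cauchy–Schwarz gives
`Re tr (Pᴴ B) = ∑ Re ⟪(P V)ᵢ, (B V)ᵢ⟫ ≤ ∑ σᵢ`, with equality iff `(B V)ᵢ = σᵢ (P V)ᵢ` for all `i`,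
i.e. `B = P (Bᴴ B)^{1/2}`. Conversely, if `B = P Λ` with `Λ ⪰ 0` then `Bᴴ B = Λ²`, so `Λ` is the
square root of `Bᴴ B` and `Re tr (Pᴴ B) = tr Λ = ∑ σᵢ`.
-/

section InnerProduct

variable {𝕜 E : Type*} [RCLike 𝕜] [NormedAddCommGroup E] [InnerProductSpace 𝕜 E]

theorem re_inner_eq_norm_iff_of_norm_eq_one {x y : E} (hx : ‖x‖ = 1) :
    RCLike.re (inner 𝕜 x y) = ‖y‖ ↔ y = (‖y‖ : 𝕜) • x := by
  constructor
  · intro h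
    have hdist : ‖y - (‖y‖ : 𝕜) • x‖ ^ 2 = (0 : ℝ) := by
      rw [norm_sub_sq (𝕜 := 𝕜), inner_smul_right, norm_smul, hx, ← inner_conj_symm,
        RCLike.re_ofReal_mul, RCLike.conj_re, h]
      simp only [norm_algebraMap', norm_norm, mul_one]
      ring
    rwa [sq_eq_zero_iff, norm_sub_eq_zero_iff] at hdist
  · intro h
    nth_rewrite 1 [h]
    simp [inner_smul_right, inner_self_eq_norm_sq_to_K, hx]

theorem sum_re_inner_eq_sum_norm_iff {ι : Type*} [Fintype ι] {x y : ι → E}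
    (hx : ∀ i, ‖x i‖ = 1) :
    ∑ i, RCLike.re (inner 𝕜 (x i) (y i)) = ∑ i, ‖y i‖ ↔ ∀ i, y i = (‖y i‖ : 𝕜) • x i := by
  have hle i : RCLike.re (inner 𝕜 (x i) (y i)) ≤ ‖y i‖ := by
    simpa [hx] using re_inner_le_norm (x i) (y i)
  rw [Finset.sum_eq_sum_iff_of_le fun i _ => hle i]
  simp [re_inner_eq_norm_iff_of_norm_eq_one (hx _)]

end InnerProduct

section Columns

variable {𝕜 m n : Type*} [RCLike 𝕜] [Fintype m]

theorem inner_toLp_col (X Y : Matrix m n 𝕜) (i j : n) :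
    inner 𝕜 (WithLp.toLp 2 (X.col i)) (WithLp.toLp 2 (Y.col j)) = (Xᴴ * Y) i j := by
  simp [PiLp.inner_apply, Matrix.mul_apply, mul_comm]

theorem norm_toLp_col (Y : Matrix m n 𝕜) (i : n) :
    ‖WithLp.toLp 2 (Y.col i)‖ = √(RCLike.re ((Yᴴ * Y) i i)) := by
  rw [← inner_toLp_col, inner_self_eq_norm_sq, Real.sqrt_sq (norm_nonneg _)]

theorem re_trace_conjTranspose_mul [Fintype n] (X Y : Matrix m n 𝕜) :
    RCLike.re (Xᴴ * Y).trace =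
      ∑ i, RCLike.re (inner 𝕜 (WithLp.toLp 2 (X.col i)) (WithLp.toLp 2 (Y.col i))) := by
  simp [Matrix.trace, inner_toLp_col]

variable [Fintype n] [DecidableEq n]

theorem re_trace_conjTranspose_mul_eq_sum_sqrt_iff {X Y : Matrix m n 𝕜} {d : n → ℝ}
    (hX : Xᴴ * X = 1) (hY : Yᴴ * Y = diagonal (RCLike.ofReal ∘ d)) :
    RCLike.re (Xᴴ * Y).trace = ∑ i, √(d i) ↔ Y = X * diagonal fun i => (√(d i) : 𝕜) := by
  have hXcol i : ‖WithLp.toLp 2 (X.col i)‖ = 1 := by simp [norm_toLp_col, hX]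
  have hYcol i : ‖WithLp.toLp 2 (Y.col i)‖ = √(d i) := by simp [norm_toLp_col, hY]
  simp_rw [re_trace_conjTranspose_mul, ← hYcol, sum_re_inner_eq_sum_norm_iff hXcol, hYcol]
  simp only [← Matrix.ext_iff, mul_diagonal, WithLp.ext_iff, funext_iff, PiLp.smul_apply,
    smul_eq_mul, Matrix.col_apply]
  exact forall_comm.trans (forall₂_congr fun _ _ => by rw [mul_comm])

end Columns

theorem sum_sortedDesc {m : ℕ} (f : Fin m → ℝ) : ∑ i, sortedDesc f i = ∑ i, f i :=
  (Equiv.sum_comp Fin.revPerm (f ∘ Tuple.sort f)).trans (Equiv.sum_comp (Tuple.sort f) f)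

theorem trNorm_eq_sum_sqrt_eigenvalues {n k : ℕ} (B : Matrix (Fin n) (Fin k) ℂ) :
    trNorm B = ∑ i, √((posSemidef_conjTranspose_mul_self B).isHermitian.eigenvalues i) :=
  sum_sortedDesc _

namespace Matrix.PosSemidef

variable {n : Type*} [Fintype n] [DecidableEq n] {A : Matrix n n ℂ}

open scoped MatrixOrder in
theorem sqrt_eq_cfcSqrt (hA : A.PosSemidef) : hA.sqrt = CFC.sqrt A := by
  rw [CFC.sqrt_eq_cfc, cfc_nnreal_eq_real _ A hA.nonneg, hA.1.cfc_eq, IsHermitian.cfc,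
    Unitary.conjStarAlgAut_apply, PosSemidef.sqrt]
  congr 3
  funext i
  simp [hA.eigenvalues_nonneg i]

open scoped MatrixOrder in
theorem posSemidef_sqrt (hA : A.PosSemidef) : hA.sqrt.PosSemidef := by
  rw [hA.sqrt_eq_cfcSqrt]
  exact nonneg_iff_posSemidef.mp (CFC.sqrt_nonneg A)

open scoped MatrixOrder in
theorem eq_sqrt_of_sq_eq {B : Matrix n n ℂ} (hB : B.PosSemidef) (hA : A.PosSemidef)
    (hBA : B ^ 2 = A) : B = hA.sqrt := by
  rw [hA.sqrt_eq_cfcSqrt, ← hBA, CFC.sqrt_sq B hB.nonneg]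

theorem re_trace_sqrt (hA : A.PosSemidef) :
    hA.sqrt.trace.re = ∑ i, √(hA.isHermitian.eigenvalues i) := by
  rw [PosSemidef.sqrt, trace_mul_comm, ← Matrix.mul_assoc, Unitary.coe_star_mul_self, one_mul,
    trace_diagonal]
  simp

end Matrix.PosSemidef

theorem eq_mul_sqrt_of_re_trace_eq_trNorm {n k : ℕ} {B P : Matrix (Fin n) (Fin k) ℂ}
    (hP : Pᴴ * P = 1) (h : (Pᴴ * B).trace.re = trNorm B) :
    B = P * (posSemidef_conjTranspose_mul_self B).sqrt := by
  set hM := posSemidef_conjTranspose_mul_self B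
  set V : Matrix (Fin k) (Fin k) ℂ := ↑hM.isHermitian.eigenvectorUnitary
  have hVV : star V * V = 1 := Unitary.coe_star_mul_self _
  have hVV' : V * star V = 1 := Unitary.coe_mul_star_self _
  have hiso : (P * V)ᴴ * (P * V) = 1 := by
    rw [conjTranspose_mul, ← star_eq_conjTranspose V, Matrix.mul_assoc, ← Matrix.mul_assoc Pᴴ, hP,
      one_mul, hVV]
  have hdiag : (B * V)ᴴ * (B * V) = diagonal (RCLike.ofReal ∘ hM.isHermitian.eigenvalues) := by
    rw [← hM.isHermitian.conjStarAlgAut_star_eigenvectorUnitary, Unitary.conjStarAlgAut_star_apply,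
      conjTranspose_mul, ← star_eq_conjTranspose V]
    simp only [Matrix.mul_assoc]
    rfl
  have htrace : ((P * V)ᴴ * (B * V)).trace = (Pᴴ * B).trace := by
    rw [conjTranspose_mul, ← star_eq_conjTranspose V, Matrix.mul_assoc, trace_mul_comm,
      Matrix.mul_assoc, Matrix.mul_assoc, hVV', Matrix.mul_one]
  have hcols := (re_trace_conjTranspose_mul_eq_sum_sqrt_iff hiso hdiag).1 <| by
    rw [RCLike.re_to_complex, htrace, h, trNorm_eq_sum_sqrt_eigenvalues]
  calc B = B * V * star V := by rw [Matrix.mul_assoc, hVV', Matrix.mul_one]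
    _ = P * hM.sqrt := by rw [hcols, PosSemidef.sqrt]; simp only [Matrix.mul_assoc]; rfl

theorem re_trace_conjTranspose_mul_eq_trNorm {n k : ℕ} {P : Matrix (Fin n) (Fin k) ℂ}
    {Λ : Matrix (Fin k) (Fin k) ℂ} (hP : Pᴴ * P = 1) (hΛ : Λ.PosSemidef) :
    (Pᴴ * (P * Λ)).trace.re = trNorm (P * Λ) := by
  have hsq : Λ ^ 2 = (P * Λ)ᴴ * (P * Λ) := by
    rw [conjTranspose_mul, hΛ.isHermitian.eq, Matrix.mul_assoc, ← Matrix.mul_assoc Pᴴ, hP,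
      one_mul, sq]
  have hM := posSemidef_conjTranspose_mul_self (P * Λ)
  rw [← Matrix.mul_assoc, hP, one_mul, trNorm_eq_sum_sqrt_eigenvalues, ← hM.re_trace_sqrt,
    ← hΛ.eq_sqrt_of_sq_eq hM hsq]

theorem re_trace_eq_trNorm_iff_general {n k : ℕ} (B P : Matrix (Fin n) (Fin k) ℂ)
    (hP : Pᴴ * P = 1) :
    (Matrix.trace (Pᴴ * B)).re = trNorm B ↔
      ∃ Λ : Matrix (Fin k) (Fin k) ℂ, Λ.PosSemidef ∧ B = P * Λ := by
  constructor
  · intro h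
    exact ⟨_, PosSemidef.posSemidef_sqrt _, eq_mul_sqrt_of_re_trace_eq_trNorm hP h⟩
  · rintro ⟨Λ, hΛ, rfl⟩
    exact re_trace_conjTranspose_mul_eq_trNorm hP hΛ

theorem re_trace_eq_trNorm_iff {n k : ℕ} (hkn : k ≤ n) (B P : Matrix (Fin n) (Fin k) ℂ)
    (hP : Pᴴ * P = 1) :
    (Matrix.trace (Pᴴ * B)).re = trNorm B ↔
      ∃ Λ : Matrix (Fin k) (Fin k) ℂ, Λ.PosSemidef ∧ B = P * Λ :=
  re_trace_eq_trNorm_iff_general B P hP
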